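/- The tension τ̂ is three times differentiable, with τ̂''(ρ) = −G'''(τ̂(ρ)) · τ̂'(ρ)³ and τ̂'''(ρ) = 3 τ̂''(ρ)² / τ̂'(ρ) − G''''(τ̂(ρ)) · τ̂'(ρ)⁴ for all ρ ∈ ℝ, and both τ̂'' and τ̂''' are bounded functions on ℝ. -/

import Mathlib

/-!
`G` is the cumulant generating function of the measure `e^{-V(r)} dr`, so `G''`, `G'''` and
`G''''` are the second to fourth cumulants of the tilted Gibbs measures `∝ e^{τ r - V(r)} dr`.
Recentring the variable at any point `y` only adds `y τ` to `G`, so these cumulants are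
polynomials in the tilted moments about `y`. If `x` maximises `τ r - V(r)`, the tilted density is
squeezed between two Gaussians centred at `x`, of variances `1 / c₂` and `1 / c₁`: this bounds the
moments about `x`, hence `G'''` and `G''''`, and bounds the variance `G''` below by some `ε > 0`.

So `G'` is a smooth increasing bijection of `ℝ`, the supremum defining `F(ρ)` is attained at
`τ̂(ρ) = (G')⁻¹(ρ)`, and differentiating `τ̂' = 1 / G''(τ̂)` twice gives both formulas; the bounds
follow from `0 < τ̂' ≤ 1 / ε`.
-/

open MeasureTheory Real

/-- The Gibbs function `G(τ) = log ∫ exp(τ r - V(r)) dr`. -/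
noncomputable def gibbsG (V : ℝ → ℝ) (τ : ℝ) : ℝ :=
  Real.log (∫ r : ℝ, Real.exp (τ * r - V r))

/-- The free energy `F(ρ) = sup_τ (τ ρ - G(τ))`. -/
noncomputable def freeF (V : ℝ → ℝ) (ρ : ℝ) : ℝ :=
  ⨆ τ : ℝ, (τ * ρ - gibbsG V τ)

/-- The tension `τ̂ = F'`. -/
noncomputable def tension (V : ℝ → ℝ) : ℝ → ℝ :=
  deriv (freeF V)

open ProbabilityTheory Set Filter

theorem ConvexOn.add_deriv_mul_sub_le {f : ℝ → ℝ} (hf : ConvexOn ℝ univ f)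
    {x : ℝ} (hx : DifferentiableAt ℝ f x) (y : ℝ) : f x + deriv f x * (y - x) ≤ f y := by
  rcases lt_trichotomy x y with hxy | rfl | hxy
  · have := hf.deriv_le_slope (mem_univ x) (mem_univ y) hxy hx
    rw [slope_def_field, le_div_iff₀ (sub_pos.2 hxy)] at this
    linarith
  · simp
  · have := hf.slope_le_of_hasDerivAt (mem_univ y) (mem_univ x) hxy hx.hasDerivAt
    rw [slope_def_field, div_le_iff₀ (sub_pos.2 hxy)] at this
    linarith

theorem add_deriv_mul_sub_add_sq_le {f : ℝ → ℝ} {c : ℝ} (hf : ContDiff ℝ 2 f)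
    (hc : ∀ r, c ≤ deriv (deriv f) r) (x y : ℝ) :
    f x + deriv f x * (y - x) + c / 2 * (y - x) ^ 2 ≤ f y := by
  set g : ℝ → ℝ := fun s => f s - c / 2 * s ^ 2
  have hf1 : Differentiable ℝ f := hf.differentiable (by norm_num)
  have hf2 : Differentiable ℝ (deriv f) := (hf.iterate_deriv' 1 1).differentiable (by norm_num)
  have hg' : deriv g = fun s => deriv f s - c * s := by
    ext s
    have := (hf1 s).hasDerivAt.fun_sub ((hasDerivAt_pow 2 s).const_mul (c / 2))
    rw [this.deriv]; push_cast; ring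
  have hg'' : ∀ s, deriv (deriv g) s = deriv (deriv f) s - c := by
    intro s
    rw [hg', ((hf2 s).hasDerivAt.fun_sub ((hasDerivAt_id' s).const_mul c)).deriv, mul_one]
  have hconv : ConvexOn ℝ univ g := by
    refine convexOn_univ_of_deriv2_nonneg (hf1.sub (by fun_prop)) ?_ fun s => ?_
    · rw [hg']; exact hf2.sub (by fun_prop)
    · rw [Function.iterate_succ_apply, Function.iterate_one, hg'' s]; linarith [hc s]
  have := hconv.add_deriv_mul_sub_le (x := x) (hf1.sub (by fun_prop) x) y
  rw [hg'] at this
  simp only [g] at this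
  nlinarith

theorem surjective_of_le_deriv {f : ℝ → ℝ} {c : ℝ} (hc : 0 < c) (hf : Differentiable ℝ f)
    (hfc : ∀ x, c ≤ deriv f x) : Function.Surjective f := by
  have hgrowth := mul_sub_le_image_sub_of_le_deriv hf hfc
  refine hf.continuous.surjective ?_ ?_
  · refine tendsto_atTop_mono' _ ?_ (tendsto_atTop_add_const_left _ (f 0)
      (tendsto_id.const_mul_atTop hc))
    filter_upwards [eventually_ge_atTop 0] with x hx
    have := hgrowth hx; simp only [id]; linarith
  · refine tendsto_atBot_mono' _ ?_ (tendsto_atBot_add_const_left _ (f 0)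
      (tendsto_id.const_mul_atBot hc))
    filter_upwards [eventually_le_atBot 0] with x hx
    have := hgrowth hx; simp only [id]; linarith

theorem ContDiff.hasDerivAt_iteratedDeriv {n : WithTop ℕ∞} {f : ℝ → ℝ} (hf : ContDiff ℝ n f)
    {k : ℕ} (hk : (k : WithTop ℕ∞) < n) (x : ℝ) :
    HasDerivAt (iteratedDeriv k f) (iteratedDeriv (k + 1) f x) x := by
  rw [iteratedDeriv_succ]
  exact (hf.differentiable_iteratedDeriv k hk x).hasDerivAt

section RightInverse

variable {f g : ℝ → ℝ} {ε : ℝ}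

theorem hasDerivAt_of_rightInverse (hf : Differentiable ℝ f) (hf' : ∀ x, deriv f x ≠ 0)
    (hg : Continuous g) (hfg : Function.RightInverse g f) (y : ℝ) :
    HasDerivAt g (deriv f (g y))⁻¹ y :=
  HasDerivAt.of_local_left_inverse hg.continuousAt (hf _).hasDerivAt (hf' _)
    (Eventually.of_forall hfg)

theorem deriv_eq_inv_of_rightInverse (hf : Differentiable ℝ f) (hf' : ∀ x, deriv f x ≠ 0)
    (hg : Continuous g) (hfg : Function.RightInverse g f) :
    deriv g = fun y => (deriv f (g y))⁻¹ :=
  funext fun y => (hasDerivAt_of_rightInverse hf hf' hg hfg y).deriv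

theorem contDiff_of_rightInverse (hf' : ∀ x, deriv f x ≠ 0) (hg : Continuous g)
    (hfg : Function.RightInverse g f) : ∀ n : ℕ, ContDiff ℝ n f → ContDiff ℝ n g
  | 0, _ => contDiff_zero.2 hg
  | n + 1, hf => by
    push_cast at hf ⊢
    have hf1 : Differentiable ℝ f := hf.differentiable (by simp)
    refine contDiff_succ_iff_deriv.2 ⟨fun y =>
      (hasDerivAt_of_rightInverse hf1 hf' hg hfg y).differentiableAt, by simp, ?_⟩
    rw [deriv_eq_inv_of_rightInverse hf1 hf' hg hfg]
    have hgn := contDiff_of_rightInverse hf' hg hfg n (hf.of_le (by simp))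
    exact ((contDiff_succ_iff_deriv.1 hf).2.2.comp hgn).inv fun y => hf' (g y)

theorem iteratedDeriv_two_of_rightInverse (hf : ContDiff ℝ 2 f) (hf' : ∀ x, deriv f x ≠ 0)
    (hg : Continuous g) (hfg : Function.RightInverse g f) (y : ℝ) :
    iteratedDeriv 2 g y = -iteratedDeriv 2 f (g y) * deriv g y ^ 3 := by
  have hf1 : Differentiable ℝ f := hf.differentiable (by simp)
  have hg' := hasDerivAt_of_rightInverse hf1 hf' hg hfg
  have hf2 : HasDerivAt (deriv f) (iteratedDeriv 2 f (g y)) (g y) := by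
    simpa using hf.hasDerivAt_iteratedDeriv (k := 1) (by norm_num) (g y)
  have h : HasDerivAt (fun y => (deriv f (g y))⁻¹) _ y := (hf2.comp y (hg' y)).inv (hf' _)
  rw [iteratedDeriv_succ, iteratedDeriv_one, deriv_eq_inv_of_rightInverse hf1 hf' hg hfg,
    h.deriv]
  simp only [Function.comp_apply]
  field_simp

theorem iteratedDeriv_three_of_rightInverse (hf : ContDiff ℝ 3 f) (hf' : ∀ x, deriv f x ≠ 0)
    (hg : Continuous g) (hfg : Function.RightInverse g f) (y : ℝ) :
    iteratedDeriv 3 g y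
      = 3 * iteratedDeriv 2 g y ^ 2 / deriv g y - iteratedDeriv 3 f (g y) * deriv g y ^ 4 := by
  have hf1 : Differentiable ℝ f := hf.differentiable (by simp)
  have hg' := hasDerivAt_of_rightInverse hf1 hf' hg hfg
  have hg'' := iteratedDeriv_two_of_rightInverse (hf.of_le (by norm_num)) hf' hg hfg
  have hf3 : HasDerivAt (iteratedDeriv 2 f) (iteratedDeriv 3 f (g y)) (g y) :=
    hf.hasDerivAt_iteratedDeriv (by norm_num) (g y)
  have hg2 : HasDerivAt (deriv g) (iteratedDeriv 2 g y) y := by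
    simpa using (contDiff_of_rightInverse hf' hg hfg 3 hf).hasDerivAt_iteratedDeriv
      (k := 1) (by norm_num) y
  have h : HasDerivAt (fun x => -iteratedDeriv 2 f (g x) * deriv g x ^ 3) _ y :=
    ((hf3.comp y (hg' y)).neg).mul (hg2.pow 3)
  rw [iteratedDeriv_succ, funext hg'', h.deriv, hg'' y]
  simp only [Function.comp_apply, Pi.neg_apply]
  rw [(hg' y).deriv]
  have := hf' (g y)
  simp only [inv_pow]
  field_simp
  ring

theorem exists_continuous_rightInverse (hε : 0 < ε) (hf : Differentiable ℝ f)
    (hf' : ∀ x, ε ≤ deriv f x) : ∃ g : ℝ → ℝ, Continuous g ∧ Function.RightInverse g f := by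
  let e := StrictMono.orderIsoOfSurjective f
    (strictMono_of_deriv_pos fun x => hε.trans_le (hf' x)) (surjective_of_le_deriv hε hf hf')
  exact ⟨e.symm, e.symm.continuous, e.apply_symm_apply⟩

theorem deriv_mem_Ioc_of_rightInverse (hε : 0 < ε) (hf : Differentiable ℝ f)
    (hf' : ∀ x, ε ≤ deriv f x) (hg : Continuous g) (hfg : Function.RightInverse g f) (y : ℝ) :
    deriv g y ∈ Ioc 0 ε⁻¹ := by
  have hpos : 0 < deriv f (g y) := hε.trans_le (hf' _)
  rw [(hasDerivAt_of_rightInverse hf (fun x => (hε.trans_le (hf' x)).ne') hg hfg y).deriv]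
  exact ⟨inv_pos.2 hpos, inv_anti₀ hε (hf' _)⟩

theorem abs_iteratedDeriv_two_le_of_rightInverse {A : ℝ} (hf : ContDiff ℝ 2 f) (hε : 0 < ε)
    (hf' : ∀ x, ε ≤ deriv f x) (hA : ∀ x, |iteratedDeriv 2 f x| ≤ A) (hg : Continuous g)
    (hfg : Function.RightInverse g f) (y : ℝ) : |iteratedDeriv 2 g y| ≤ A * ε⁻¹ ^ 3 := by
  have hf1 : Differentiable ℝ f := hf.differentiable (by simp)
  obtain ⟨hpos, hle⟩ := deriv_mem_Ioc_of_rightInverse hε hf1 hf' hg hfg y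
  rw [iteratedDeriv_two_of_rightInverse hf (fun x => (hε.trans_le (hf' x)).ne') hg hfg,
    abs_mul, abs_neg, abs_pow, abs_of_pos hpos]
  gcongr
  · exact (abs_nonneg _).trans (hA 0)
  · exact hA _

theorem abs_iteratedDeriv_three_le_of_rightInverse {A B : ℝ} (hf : ContDiff ℝ 3 f) (hε : 0 < ε)
    (hf' : ∀ x, ε ≤ deriv f x) (hA : ∀ x, |iteratedDeriv 2 f x| ≤ A)
    (hB : ∀ x, |iteratedDeriv 3 f x| ≤ B) (hg : Continuous g) (hfg : Function.RightInverse g f)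
    (y : ℝ) : |iteratedDeriv 3 g y| ≤ 3 * A ^ 2 * ε⁻¹ ^ 5 + B * ε⁻¹ ^ 4 := by
  have hf1 : Differentiable ℝ f := hf.differentiable (by simp)
  have hf'0 : ∀ x, deriv f x ≠ 0 := fun x => (hε.trans_le (hf' x)).ne'
  obtain ⟨hpos, hle⟩ := deriv_mem_Ioc_of_rightInverse hε hf1 hf' hg hfg y
  rw [iteratedDeriv_three_of_rightInverse hf hf'0 hg hfg,
    iteratedDeriv_two_of_rightInverse (hf.of_le (by norm_num)) hf'0 hg hfg]
  set d := deriv g y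
  set a := iteratedDeriv 2 f (g y)
  have hsq : 3 * (-a * d ^ 3) ^ 2 / d = 3 * a ^ 2 * d ^ 5 := by
    field_simp
  have ha : a ^ 2 ≤ A ^ 2 := by
    rw [← sq_abs]; exact pow_le_pow_left₀ (abs_nonneg a) (hA _) 2
  rw [hsq]
  calc |3 * a ^ 2 * d ^ 5 - iteratedDeriv 3 f (g y) * d ^ 4|
      ≤ 3 * a ^ 2 * d ^ 5 + |iteratedDeriv 3 f (g y)| * d ^ 4 := by
        refine (abs_sub _ _).trans (le_of_eq ?_)
        rw [abs_of_nonneg (by positivity), abs_mul, abs_of_pos (by positivity : 0 < d ^ 4)]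
    _ ≤ 3 * A ^ 2 * ε⁻¹ ^ 5 + B * ε⁻¹ ^ 4 := by
        gcongr
        · exact (abs_nonneg _).trans (hB 0)
        · exact hB _

end RightInverse

section Legendre

variable {G g : ℝ → ℝ}

theorem iSup_mul_sub_eq_of_deriv_eq (hG : ConvexOn ℝ univ G) (hGd : Differentiable ℝ G)
    {ρ t : ℝ} (ht : deriv G t = ρ) : ⨆ τ, (τ * ρ - G τ) = t * ρ - G t := by
  have hmax : ∀ τ, τ * ρ - G τ ≤ t * ρ - G t := fun τ => by
    have := hG.add_deriv_mul_sub_le (hGd t) τ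
    rw [ht] at this
    linarith
  exact le_antisymm (ciSup_le hmax) (le_ciSup ⟨_, forall_mem_range.2 hmax⟩ t)

theorem deriv_iSup_mul_sub (hG : ConvexOn ℝ univ G) (hGd : Differentiable ℝ G)
    (hg : Differentiable ℝ g) (hfg : Function.RightInverse g (deriv G)) :
    deriv (fun ρ => ⨆ τ, (τ * ρ - G τ)) = g := by
  ext ρ
  rw [funext fun ρ => iSup_mul_sub_eq_of_deriv_eq hG hGd (hfg ρ)]
  have h : HasDerivAt (fun ρ => g ρ * ρ - G (g ρ)) _ ρ :=
    ((hg ρ).hasDerivAt.mul (hasDerivAt_id ρ)).sub ((hGd (g ρ)).hasDerivAt.comp ρ (hg ρ).hasDerivAt)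
  rw [h.deriv, hfg, id, mul_one]
  ring

theorem deriv_iSup_mul_sub_formulas_and_bounded {G T : ℝ → ℝ} {ε A B : ℝ} (hG : ContDiff ℝ 4 G)
    (hε : 0 < ε) (h2 : ∀ τ, ε ≤ iteratedDeriv 2 G τ) (h3 : ∀ τ, |iteratedDeriv 3 G τ| ≤ A)
    (h4 : ∀ τ, |iteratedDeriv 4 G τ| ≤ B) (hT : deriv (fun ρ => ⨆ τ, (τ * ρ - G τ)) = T) :
    ContDiff ℝ 3 T ∧
    (∀ ρ, iteratedDeriv 2 T ρ = -(iteratedDeriv 3 G (T ρ)) * (deriv T ρ) ^ 3 ∧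
      iteratedDeriv 3 T ρ
        = 3 * (iteratedDeriv 2 T ρ) ^ 2 / deriv T ρ - iteratedDeriv 4 G (T ρ) * (deriv T ρ) ^ 4) ∧
    (∃ C, ∀ ρ, |iteratedDeriv 2 T ρ| ≤ C ∧ |iteratedDeriv 3 T ρ| ≤ C) := by
  set f := deriv G
  have hf : ContDiff ℝ 3 f := hG.iterate_deriv' 3 1
  have hshift : ∀ k, iteratedDeriv (k + 1) G = iteratedDeriv k f := fun k => iteratedDeriv_succ'
  rw [hshift 1, iteratedDeriv_one] at h2
  rw [hshift 2] at h3 ⊢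
  rw [hshift 3] at h4 ⊢
  have hf1 : Differentiable ℝ f := hf.differentiable (by simp)
  have hf'0 : ∀ x, deriv f x ≠ 0 := fun x => (hε.trans_le (h2 x)).ne'
  obtain ⟨g, hg, hfg⟩ := exists_continuous_rightInverse hε hf1 h2
  have hconv : ConvexOn ℝ univ G :=
    (strictMono_of_deriv_pos fun x => hε.trans_le (h2 x)).monotone.convexOn_univ_of_deriv
      (hG.differentiable (by simp))
  obtain rfl : g = T := hT ▸ (deriv_iSup_mul_sub hconv (hG.differentiable (by simp))
    (fun y => (hasDerivAt_of_rightInverse hf1 hf'0 hg hfg y).differentiableAt) hfg).symm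
  refine ⟨contDiff_of_rightInverse hf'0 hg hfg 3 hf, fun ρ =>
    ⟨iteratedDeriv_two_of_rightInverse (hf.of_le (by norm_num)) hf'0 hg hfg ρ,
      iteratedDeriv_three_of_rightInverse hf hf'0 hg hfg ρ⟩,
    max (A * ε⁻¹ ^ 3) (3 * A ^ 2 * ε⁻¹ ^ 5 + B * ε⁻¹ ^ 4), fun ρ =>
    ⟨(abs_iteratedDeriv_two_le_of_rightInverse (hf.of_le (by norm_num)) hε h2 h3 hg hfg ρ).trans
      (le_max_left _ _),
    (abs_iteratedDeriv_three_le_of_rightInverse hf hε h2 h3 h4 hg hfg ρ).trans (le_max_right _ _)⟩⟩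

end Legendre

/-- For an mgf `Z`, the `k`-th moment of the measure tilted by `e^{t x}`. -/
noncomputable def tiltedMoment (Z : ℝ → ℝ) (k : ℕ) (t : ℝ) : ℝ := iteratedDeriv k Z t / Z t

section LogDeriv

variable {Z : ℝ → ℝ} {n : WithTop ℕ∞}

local notation "m" => tiltedMoment Z

theorem hasDerivAt_tiltedMoment (hZ : ContDiff ℝ n Z) (hpos : ∀ t, 0 < Z t) {k : ℕ}
    (hk : (k : WithTop ℕ∞) < n) (t : ℝ) :
    HasDerivAt (m k) (m (k + 1) t - m k t * m 1 t) t := by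
  have h0 : HasDerivAt Z (iteratedDeriv 1 Z t) t := by
    simpa using hZ.hasDerivAt_iteratedDeriv (k := 0) (lt_of_le_of_lt (by simp) hk) t
  have h : HasDerivAt (m k) _ t := (hZ.hasDerivAt_iteratedDeriv hk t).div h0 (hpos t).ne'
  refine h.congr_deriv ?_
  have := (hpos t).ne'
  simp only [tiltedMoment]
  field_simp

theorem deriv_log_comp (hZ : ContDiff ℝ 1 Z) (hpos : ∀ t, 0 < Z t) :
    deriv (fun t => log (Z t)) = m 1 := by
  ext t
  have := (hZ.differentiable (by norm_num) t).hasDerivAt.log (hpos t).ne'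
  rw [this.deriv, tiltedMoment, iteratedDeriv_one]

theorem iteratedDeriv_two_log_comp (hZ : ContDiff ℝ 2 Z) (hpos : ∀ t, 0 < Z t) :
    iteratedDeriv 2 (fun t => log (Z t)) = fun t => m 2 t - m 1 t ^ 2 := by
  ext t
  rw [iteratedDeriv_succ, iteratedDeriv_one, deriv_log_comp (hZ.of_le (by norm_num)) hpos,
    (hasDerivAt_tiltedMoment hZ hpos (k := 1) (by norm_num) t).deriv]
  ring

theorem iteratedDeriv_three_log_comp (hZ : ContDiff ℝ 3 Z) (hpos : ∀ t, 0 < Z t) :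
    iteratedDeriv 3 (fun t => log (Z t))
      = fun t => m 3 t - 3 * m 1 t * m 2 t + 2 * m 1 t ^ 3 := by
  ext t
  have h1 := hasDerivAt_tiltedMoment hZ hpos (k := 1) (by norm_num) t
  have h2 := hasDerivAt_tiltedMoment hZ hpos (k := 2) (by norm_num) t
  rw [iteratedDeriv_succ, iteratedDeriv_two_log_comp (hZ.of_le (by norm_num)) hpos,
    (h2.fun_sub (h1.fun_pow 2)).deriv]
  push_cast
  ring

theorem iteratedDeriv_four_log_comp (hZ : ContDiff ℝ 4 Z) (hpos : ∀ t, 0 < Z t) :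
    iteratedDeriv 4 (fun t => log (Z t)) = fun t => m 4 t - 4 * m 1 t * m 3 t
      - 3 * m 2 t ^ 2 + 12 * m 1 t ^ 2 * m 2 t - 6 * m 1 t ^ 4 := by
  ext t
  have h1 := hasDerivAt_tiltedMoment hZ hpos (k := 1) (by norm_num) t
  have h2 := hasDerivAt_tiltedMoment hZ hpos (k := 2) (by norm_num) t
  have h3 := hasDerivAt_tiltedMoment hZ hpos (k := 3) (by norm_num) t
  rw [iteratedDeriv_succ, iteratedDeriv_three_log_comp (hZ.of_le (by norm_num)) hpos,
    ((h3.fun_sub ((h1.const_mul 3).fun_mul h2)).fun_add ((h1.fun_pow 3).const_mul 2)).deriv]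
  push_cast
  ring

end LogDeriv

theorem integrable_abs_pow_mul_exp_neg_mul_sq {b : ℝ} (hb : 0 < b) (k : ℕ) :
    Integrable fun s : ℝ => |s| ^ k * exp (-b * s ^ 2) := by
  have := (integrable_rpow_mul_exp_neg_mul_sq hb (s := k)
    (by linarith [k.cast_nonneg (α := ℝ)])).norm
  simpa [Real.rpow_natCast, abs_mul, abs_of_pos (exp_pos _)] using this

section GaussianComparison

variable {φ : ℝ → ℝ} {M x c : ℝ}

theorem integral_abs_pow_mul_exp_le (hc : 0 < c) (hφ : ∀ r, φ r ≤ M - c / 2 * (r - x) ^ 2)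
    (k : ℕ) :
    ∫ r, |r - x| ^ k * exp (φ r) ≤ exp M * ∫ s, |s| ^ k * exp (-(c / 2) * s ^ 2) := by
  rw [← integral_sub_right_eq_self (fun s => |s| ^ k * exp (-(c / 2) * s ^ 2)) x,
    ← integral_const_mul]
  refine integral_mono_of_nonneg (ae_of_all _ fun r => by positivity)
    (((integrable_abs_pow_mul_exp_neg_mul_sq (half_pos hc) k).comp_sub_right x).const_mul _)
    (ae_of_all _ fun r => ?_)
  dsimp only
  rw [mul_left_comm, ← exp_add]
  gcongr
  linarith [hφ r]

theorem integrable_exp_of_le (hφc : Continuous φ) (hc : 0 < c)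
    (hφ : ∀ r, φ r ≤ M - c / 2 * (r - x) ^ 2) : Integrable fun r => exp (φ r) := by
  refine Integrable.mono' (((integrable_exp_neg_mul_sq (half_pos hc)).comp_sub_right x).const_mul
    (exp M)) (by fun_prop) (ae_of_all _ fun r => ?_)
  rw [norm_of_nonneg (exp_pos _).le, ← exp_add]
  gcongr
  linarith [hφ r]

theorem exp_mul_integral_le_integral_exp (hc : 0 < c) (hφ : ∀ r, M - c / 2 * (r - x) ^ 2 ≤ φ r)
    (hint : Integrable fun r => exp (φ r)) :
    exp M * ∫ s, exp (-(c / 2) * s ^ 2) ≤ ∫ r, exp (φ r) := by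
  rw [← integral_sub_right_eq_self (fun s => exp (-(c / 2) * s ^ 2)) x, ← integral_const_mul]
  refine integral_mono (((integrable_exp_neg_mul_sq (half_pos hc)).comp_sub_right x).const_mul _)
    hint fun r => ?_
  dsimp only
  rw [← exp_add]
  gcongr
  linarith [hφ r]

theorem exp_mul_le_integral_sq_mul_exp (hc : 0 ≤ c) (hφ : ∀ r, M - c / 2 * (r - x) ^ 2 ≤ φ r)
    {y : ℝ} (hint : Integrable fun r => (r - y) ^ 2 * exp (φ r)) :
    2 / 3 * exp (M - c / 2) ≤ ∫ r, (r - y) ^ 2 * exp (φ r) := by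
  have hbox : 2 / 3 ≤ ∫ r in x - 1..x + 1, (r - y) ^ 2 := by
    rw [intervalIntegral.integral_comp_sub_right (fun u => u ^ 2) y, integral_pow]
    nlinarith [sq_nonneg (x - y)]
  -- on `[x - 1, x + 1]` the density `exp ∘ φ` is at least `exp (M - c / 2)`
  calc 2 / 3 * exp (M - c / 2) ≤ ∫ r in Icc (x - 1) (x + 1), exp (M - c / 2) * (r - y) ^ 2 := by
        rw [integral_const_mul, integral_Icc_eq_integral_Ioc,
          ← intervalIntegral.integral_of_le (by linarith), mul_comm]
        gcongr
    _ ≤ ∫ r in Icc (x - 1) (x + 1), (r - y) ^ 2 * exp (φ r) := by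
        refine setIntegral_mono_on (by fun_prop : Continuous _).integrableOn_Icc
          hint.integrableOn measurableSet_Icc fun r hr => ?_
        rw [mul_comm]
        gcongr
        have : (r - x) ^ 2 ≤ 1 := by nlinarith [hr.1, hr.2]
        nlinarith [hφ r, mul_le_mul_of_nonneg_left this (div_nonneg hc zero_le_two)]
    _ ≤ ∫ r, (r - y) ^ 2 * exp (φ r) :=
        setIntegral_le_integral hint (ae_of_all _ fun r => by positivity)

end GaussianComparison

noncomputable def gibbsMeasure (V : ℝ → ℝ) : Measure ℝ :=
  volume.withDensity fun r => ENNReal.ofReal (exp (-V r))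

section GibbsMeasure

variable {V : ℝ → ℝ}

theorem integral_gibbsMeasure (hV : Measurable V) (g : ℝ → ℝ) :
    ∫ r, g r ∂gibbsMeasure V = ∫ r, exp (-V r) * g r := by
  rw [gibbsMeasure, integral_withDensity_eq_integral_toReal_smul (by fun_prop)
    (ae_of_all _ fun _ => ENNReal.ofReal_lt_top)]
  simp [ENNReal.toReal_ofReal (exp_pos _).le]

theorem integrable_gibbsMeasure_iff (hV : Measurable V) {g : ℝ → ℝ} :
    Integrable g (gibbsMeasure V) ↔ Integrable fun r => exp (-V r) * g r := by
  rw [gibbsMeasure, integrable_withDensity_iff_integrable_smul' (by fun_prop)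
    (ae_of_all _ fun _ => ENNReal.ofReal_lt_top)]
  simp [ENNReal.toReal_ofReal (exp_pos _).le]

variable {y : ℝ}

theorem exp_neg_mul_exp_mul_sub (t r : ℝ) :
    exp (-V r) * exp (t * (r - y)) = exp (t * (r - y) - V r) := by
  rw [← exp_add]; ring_nf

theorem interior_integrableExpSet_gibbsMeasure (hV : Measurable V)
    (hint : ∀ t, Integrable fun r => exp (t * (r - y) - V r)) :
    interior (integrableExpSet (fun r => r - y) (gibbsMeasure V)) = univ := by
  rw [interior_eq_univ, eq_univ_iff_forall]
  intro t
  simpa [integrableExpSet, integrable_gibbsMeasure_iff hV, exp_neg_mul_exp_mul_sub] using hint t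

theorem iteratedDeriv_mgf_gibbsMeasure (hV : Measurable V)
    (hint : ∀ t, Integrable fun r => exp (t * (r - y) - V r)) (k : ℕ) (t : ℝ) :
    iteratedDeriv k (mgf (fun r => r - y) (gibbsMeasure V)) t
      = ∫ r, (r - y) ^ k * exp (t * (r - y) - V r) := by
  rw [iteratedDeriv_mgf (by simp [interior_integrableExpSet_gibbsMeasure hV hint]),
    integral_gibbsMeasure hV]
  simp_rw [mul_left_comm (exp _), exp_neg_mul_exp_mul_sub]

theorem integrable_pow_mul_exp_mul_sub (hV : Measurable V)
    (hint : ∀ t, Integrable fun r => exp (t * (r - y) - V r)) (k : ℕ) (t : ℝ) :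
    Integrable fun r => (r - y) ^ k * exp (t * (r - y) - V r) := by
  have hmem : t ∈ interior (integrableExpSet (fun r => r - y) (gibbsMeasure V)) := by
    simp [interior_integrableExpSet_gibbsMeasure hV hint]
  have := integrable_pow_mul_exp_of_mem_interior_integrableExpSet hmem k
  rw [integrable_gibbsMeasure_iff hV] at this
  simpa only [mul_left_comm (exp _), exp_neg_mul_exp_mul_sub] using this

theorem contDiff_mgf_gibbsMeasure (hV : Measurable V)
    (hint : ∀ t, Integrable fun r => exp (t * (r - y) - V r)) {n : WithTop ℕ∞} :
    ContDiff ℝ n (mgf (fun r => r - y) (gibbsMeasure V)) :=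
  AnalyticOnNhd.contDiff (interior_integrableExpSet_gibbsMeasure hV hint ▸ analyticOnNhd_mgf)

end GibbsMeasure

section Potential

variable {V : ℝ → ℝ} {c₁ c₂ : ℝ}

theorem exists_deriv_eq (hc₁ : 0 < c₁) (hV : ContDiff ℝ 2 V) (hlow : ∀ r, c₁ ≤ deriv (deriv V) r)
    (τ : ℝ) : ∃ x, deriv V x = τ :=
  surjective_of_le_deriv hc₁ ((hV.iterate_deriv' 1 1).differentiable (by norm_num)) hlow τ

theorem mul_sub_sub_le_of_deriv_eq (hV : ContDiff ℝ 2 V) (hlow : ∀ r, c₁ ≤ deriv (deriv V) r)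
    {τ x : ℝ} (hx : deriv V x = τ) (y r : ℝ) :
    τ * (r - y) - V r ≤ τ * (x - y) - V x - c₁ / 2 * (r - x) ^ 2 := by
  have := add_deriv_mul_sub_add_sq_le hV hlow x r
  rw [hx] at this
  linarith

theorem le_mul_sub_sub_of_deriv_eq (hV : ContDiff ℝ 2 V) (hhigh : ∀ r, deriv (deriv V) r ≤ c₂)
    {τ x : ℝ} (hx : deriv V x = τ) (y r : ℝ) :
    τ * (x - y) - V x - c₂ / 2 * (r - x) ^ 2 ≤ τ * (r - y) - V r := by
  have hneg : ∀ r, -c₂ ≤ deriv (deriv fun s => -V s) r := fun r => by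
    simp only [deriv.fun_neg']
    linarith [hhigh r]
  have := add_deriv_mul_sub_add_sq_le hV.neg hneg x r
  simp only [deriv.fun_neg', hx] at this
  linarith

theorem integrable_exp_mul_sub_sub (hc₁ : 0 < c₁) (hV : ContDiff ℝ 2 V)
    (hlow : ∀ r, c₁ ≤ deriv (deriv V) r) (τ y : ℝ) :
    Integrable fun r => exp (τ * (r - y) - V r) := by
  obtain ⟨x, hx⟩ := exists_deriv_eq hc₁ hV hlow τ
  exact integrable_exp_of_le (by fun_prop) hc₁ (mul_sub_sub_le_of_deriv_eq hV hlow hx y)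

end Potential

noncomputable def shiftedPartition (V : ℝ → ℝ) (y : ℝ) : ℝ → ℝ :=
  mgf (fun r => r - y) (gibbsMeasure V)

section Cumulants

variable {V : ℝ → ℝ} {c₁ c₂ : ℝ}

theorem iteratedDeriv_shiftedPartition (hc₁ : 0 < c₁) (hV : ContDiff ℝ 2 V)
    (hlow : ∀ r, c₁ ≤ deriv (deriv V) r) (y : ℝ) (k : ℕ) (τ : ℝ) :
    iteratedDeriv k (shiftedPartition V y) τ = ∫ r, (r - y) ^ k * exp (τ * (r - y) - V r) :=
  iteratedDeriv_mgf_gibbsMeasure hV.continuous.measurable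
    (fun t => integrable_exp_mul_sub_sub hc₁ hV hlow t y) k τ

theorem shiftedPartition_eq (hc₁ : 0 < c₁) (hV : ContDiff ℝ 2 V)
    (hlow : ∀ r, c₁ ≤ deriv (deriv V) r) (y τ : ℝ) :
    shiftedPartition V y τ = ∫ r, exp (τ * (r - y) - V r) := by
  simpa using iteratedDeriv_shiftedPartition hc₁ hV hlow y 0 τ

theorem shiftedPartition_pos (hc₁ : 0 < c₁) (hV : ContDiff ℝ 2 V)
    (hlow : ∀ r, c₁ ≤ deriv (deriv V) r) (y τ : ℝ) : 0 < shiftedPartition V y τ := by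
  rw [shiftedPartition_eq hc₁ hV hlow]
  exact integral_exp_pos (integrable_exp_mul_sub_sub hc₁ hV hlow τ y)

theorem contDiff_shiftedPartition (hc₁ : 0 < c₁) (hV : ContDiff ℝ 2 V)
    (hlow : ∀ r, c₁ ≤ deriv (deriv V) r) (y : ℝ) {n : WithTop ℕ∞} :
    ContDiff ℝ n (shiftedPartition V y) :=
  contDiff_mgf_gibbsMeasure hV.continuous.measurable
    fun t => integrable_exp_mul_sub_sub hc₁ hV hlow t y

theorem gibbsG_eq_log_shiftedPartition_add (hc₁ : 0 < c₁) (hV : ContDiff ℝ 2 V)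
    (hlow : ∀ r, c₁ ≤ deriv (deriv V) r) (y : ℝ) :
    gibbsG V = fun τ => y * τ + log (shiftedPartition V y τ) := by
  ext τ
  have hshift : shiftedPartition V y τ = exp (-(τ * y)) * ∫ r, exp (τ * r - V r) := by
    rw [shiftedPartition_eq hc₁ hV hlow, ← integral_const_mul]
    congr 1 with r
    rw [← exp_add]; ring_nf
  have hpos : 0 < ∫ r, exp (τ * r - V r) := integral_exp_pos (by
    simpa using integrable_exp_mul_sub_sub hc₁ hV hlow τ 0)
  rw [hshift, log_mul (exp_pos _).ne' hpos.ne', log_exp, gibbsG]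
  ring

theorem contDiff_gibbsG (hc₁ : 0 < c₁) (hV : ContDiff ℝ 2 V)
    (hlow : ∀ r, c₁ ≤ deriv (deriv V) r) {n : WithTop ℕ∞} : ContDiff ℝ n (gibbsG V) := by
  rw [gibbsG_eq_log_shiftedPartition_add hc₁ hV hlow 0]
  exact contDiff_const.mul contDiff_id |>.add <| (contDiff_shiftedPartition hc₁ hV hlow 0).log
    fun τ => (shiftedPartition_pos hc₁ hV hlow 0 τ).ne'

theorem deriv_gibbsG (hc₁ : 0 < c₁) (hV : ContDiff ℝ 2 V)
    (hlow : ∀ r, c₁ ≤ deriv (deriv V) r) (y : ℝ) :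
    deriv (gibbsG V) = fun τ => y + tiltedMoment (shiftedPartition V y) 1 τ := by
  have hZ := contDiff_shiftedPartition hc₁ hV hlow y (n := 1)
  have hpos := shiftedPartition_pos hc₁ hV hlow y
  ext τ
  have hlog := ((hZ.differentiable (by norm_num) τ).log (hpos τ).ne').hasDerivAt
  rw [gibbsG_eq_log_shiftedPartition_add hc₁ hV hlow y, ← deriv_log_comp hZ hpos,
    (((hasDerivAt_id' τ).const_mul y).fun_add hlog).deriv, mul_one]

theorem iteratedDeriv_gibbsG (hc₁ : 0 < c₁) (hV : ContDiff ℝ 2 V)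
    (hlow : ∀ r, c₁ ≤ deriv (deriv V) r) (y : ℝ) {k : ℕ} (hk : 2 ≤ k) :
    iteratedDeriv k (gibbsG V) = iteratedDeriv k fun τ => log (shiftedPartition V y τ) := by
  obtain ⟨j, rfl⟩ := Nat.exists_eq_add_of_le' hk
  ext τ
  rw [iteratedDeriv_succ', iteratedDeriv_succ' (f := fun τ => log _), deriv_gibbsG hc₁ hV hlow y,
    iteratedDeriv_const_add j.succ_pos, deriv_log_comp (contDiff_shiftedPartition hc₁ hV hlow y)
      (shiftedPartition_pos hc₁ hV hlow y)]

theorem tiltedMoment_shiftedPartition (hc₁ : 0 < c₁) (hV : ContDiff ℝ 2 V)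
    (hlow : ∀ r, c₁ ≤ deriv (deriv V) r) (y : ℝ) (k : ℕ) (τ : ℝ) :
    tiltedMoment (shiftedPartition V y) k τ
      = (∫ r, (r - y) ^ k * exp (τ * (r - y) - V r)) / ∫ r, exp (τ * (r - y) - V r) := by
  rw [tiltedMoment, iteratedDeriv_shiftedPartition hc₁ hV hlow, shiftedPartition_eq hc₁ hV hlow]

end Cumulants

section Bounds

variable {V : ℝ → ℝ} {c₁ c₂ : ℝ}

theorem abs_tiltedMoment_shiftedPartition_le (hc₁ : 0 < c₁) (hV : ContDiff ℝ 2 V)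
    (hlow : ∀ r, c₁ ≤ deriv (deriv V) r) (hhigh : ∀ r, deriv (deriv V) r ≤ c₂) {τ x : ℝ}
    (hx : deriv V x = τ) (k : ℕ) :
    |tiltedMoment (shiftedPartition V x) k τ|
      ≤ (∫ s, |s| ^ k * exp (-(c₁ / 2) * s ^ 2)) / ∫ s, exp (-(c₂ / 2) * s ^ 2) := by
  have hc₂ : 0 < c₂ := hc₁.trans_le ((hlow 0).trans (hhigh 0))
  have hint := integrable_exp_mul_sub_sub hc₁ hV hlow τ x
  have hnum := integral_abs_pow_mul_exp_le hc₁ (mul_sub_sub_le_of_deriv_eq hV hlow hx x) k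
  have hden := exp_mul_integral_le_integral_exp hc₂ (le_mul_sub_sub_of_deriv_eq hV hhigh hx x) hint
  have hgauss : 0 < ∫ s, exp (-(c₂ / 2) * s ^ 2) :=
    integral_exp_pos (integrable_exp_neg_mul_sq (half_pos hc₂))
  rw [tiltedMoment_shiftedPartition hc₁ hV hlow, abs_div, abs_of_pos (integral_exp_pos hint),
    ← mul_div_mul_left (∫ s, |s| ^ k * exp (-(c₁ / 2) * s ^ 2)) _ (exp_pos (τ * (x - x) - V x)).ne']
  refine div_le_div₀ (by positivity) ((abs_integral_le_integral_abs).trans (le_of_eq ?_)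
    |>.trans hnum) (by positivity) hden
  simp [abs_mul, abs_pow]

theorem le_tiltedMoment_two_shiftedPartition (hc₁ : 0 < c₁) (hV : ContDiff ℝ 2 V)
    (hlow : ∀ r, c₁ ≤ deriv (deriv V) r) (hhigh : ∀ r, deriv (deriv V) r ≤ c₂) (y τ : ℝ) :
    2 / 3 * exp (-(c₂ / 2)) / ∫ s, exp (-(c₁ / 2) * s ^ 2)
      ≤ tiltedMoment (shiftedPartition V y) 2 τ := by
  have hc₂ : 0 < c₂ := hc₁.trans_le ((hlow 0).trans (hhigh 0))
  obtain ⟨x, hx⟩ := exists_deriv_eq hc₁ hV hlow τ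
  set M := τ * (x - y) - V x
  have hnum := exp_mul_le_integral_sq_mul_exp hc₂.le (le_mul_sub_sub_of_deriv_eq hV hhigh hx y)
    (integrable_pow_mul_exp_mul_sub hV.continuous.measurable
      (fun t => integrable_exp_mul_sub_sub hc₁ hV hlow t y) 2 τ)
  have hden := integral_abs_pow_mul_exp_le hc₁ (mul_sub_sub_le_of_deriv_eq hV hlow hx y) 0
  simp only [pow_zero, one_mul] at hden
  have hgauss : 0 < ∫ s, exp (-(c₁ / 2) * s ^ 2) :=
    integral_exp_pos (integrable_exp_neg_mul_sq (half_pos hc₁))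
  have heq : 2 / 3 * exp (-(c₂ / 2)) / ∫ s, exp (-(c₁ / 2) * s ^ 2)
      = 2 / 3 * exp (M - c₂ / 2) / (exp M * ∫ s, exp (-(c₁ / 2) * s ^ 2)) := by
    rw [sub_eq_add_neg, exp_add]
    field_simp
  rw [heq, tiltedMoment_shiftedPartition hc₁ hV hlow]
  exact div_le_div₀ (by positivity) hnum
    (integral_exp_pos (integrable_exp_mul_sub_sub hc₁ hV hlow τ y)) hden

theorem exists_pos_le_iteratedDeriv_two_gibbsG (hc₁ : 0 < c₁) (hV : ContDiff ℝ 2 V)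
    (hlow : ∀ r, c₁ ≤ deriv (deriv V) r) (hhigh : ∀ r, deriv (deriv V) r ≤ c₂) :
    ∃ ε > 0, ∀ τ, ε ≤ iteratedDeriv 2 (gibbsG V) τ := by
  have hgauss := integral_exp_pos (integrable_exp_neg_mul_sq (half_pos hc₁))
  refine ⟨2 / 3 * exp (-(c₂ / 2)) / ∫ s, exp (-(c₁ / 2) * s ^ 2), by positivity, fun τ => ?_⟩
  -- centring at the mean `y = G'(τ)` kills the first tilted moment
  set y := deriv (gibbsG V) τ
  have hmean : tiltedMoment (shiftedPartition V y) 1 τ = 0 := by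
    have := congrFun (deriv_gibbsG hc₁ hV hlow y) τ
    linarith
  rw [iteratedDeriv_gibbsG hc₁ hV hlow y le_rfl, iteratedDeriv_two_log_comp
    (contDiff_shiftedPartition hc₁ hV hlow y) (shiftedPartition_pos hc₁ hV hlow y)]
  simpa [hmean] using le_tiltedMoment_two_shiftedPartition hc₁ hV hlow hhigh y τ

theorem exists_abs_iteratedDeriv_three_gibbsG_le (hc₁ : 0 < c₁) (hV : ContDiff ℝ 2 V)
    (hlow : ∀ r, c₁ ≤ deriv (deriv V) r) (hhigh : ∀ r, deriv (deriv V) r ≤ c₂) :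
    ∃ A, ∀ τ, |iteratedDeriv 3 (gibbsG V) τ| ≤ A := by
  set B : ℕ → ℝ := fun k =>
    (∫ s, |s| ^ k * exp (-(c₁ / 2) * s ^ 2)) / ∫ s, exp (-(c₂ / 2) * s ^ 2)
  refine ⟨B 3 + 3 * B 1 * B 2 + 2 * B 1 ^ 3, fun τ => ?_⟩
  obtain ⟨x, hx⟩ := exists_deriv_eq hc₁ hV hlow τ
  set m := fun k => tiltedMoment (shiftedPartition V x) k τ
  have hm : ∀ k, |m k| ≤ B k := abs_tiltedMoment_shiftedPartition_le hc₁ hV hlow hhigh hx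
  rw [iteratedDeriv_gibbsG hc₁ hV hlow x (by norm_num), iteratedDeriv_three_log_comp
    (contDiff_shiftedPartition hc₁ hV hlow x) (shiftedPartition_pos hc₁ hV hlow x)]
  calc |m 3 - 3 * m 1 * m 2 + 2 * m 1 ^ 3| ≤ |m 3| + 3 * |m 1| * |m 2| + 2 * |m 1| ^ 3 := by
        refine (abs_add_le _ _).trans (add_le_add ((abs_sub _ _).trans ?_) ?_) <;> simp [abs_mul]
    _ ≤ _ := by gcongr <;> linarith [abs_nonneg (m 1), hm 1, hm 2, hm 3]

theorem exists_abs_iteratedDeriv_four_gibbsG_le (hc₁ : 0 < c₁) (hV : ContDiff ℝ 2 V)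
    (hlow : ∀ r, c₁ ≤ deriv (deriv V) r) (hhigh : ∀ r, deriv (deriv V) r ≤ c₂) :
    ∃ A, ∀ τ, |iteratedDeriv 4 (gibbsG V) τ| ≤ A := by
  set B : ℕ → ℝ := fun k =>
    (∫ s, |s| ^ k * exp (-(c₁ / 2) * s ^ 2)) / ∫ s, exp (-(c₂ / 2) * s ^ 2)
  refine ⟨B 4 + 4 * B 1 * B 3 + 3 * B 2 ^ 2 + 12 * B 1 ^ 2 * B 2 + 6 * B 1 ^ 4, fun τ => ?_⟩
  obtain ⟨x, hx⟩ := exists_deriv_eq hc₁ hV hlow τ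
  set m := fun k => tiltedMoment (shiftedPartition V x) k τ
  have hm : ∀ k, |m k| ≤ B k := abs_tiltedMoment_shiftedPartition_le hc₁ hV hlow hhigh hx
  rw [iteratedDeriv_gibbsG hc₁ hV hlow x (by norm_num), iteratedDeriv_four_log_comp
    (contDiff_shiftedPartition hc₁ hV hlow x) (shiftedPartition_pos hc₁ hV hlow x)]
  calc |m 4 - 4 * m 1 * m 3 - 3 * m 2 ^ 2 + 12 * m 1 ^ 2 * m 2 - 6 * m 1 ^ 4|
      ≤ |m 4| + 4 * |m 1| * |m 3| + 3 * |m 2| ^ 2 + 12 * |m 1| ^ 2 * |m 2| + 6 * |m 1| ^ 4 := by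
        refine (abs_sub _ _).trans (add_le_add ((abs_add_le _ _).trans (add_le_add
          ((abs_sub _ _).trans (add_le_add ((abs_sub _ _).trans ?_) ?_)) ?_)) ?_) <;>
          simp [abs_mul]
    _ ≤ _ := by gcongr <;> linarith [abs_nonneg (m 1), abs_nonneg (m 2), hm 1, hm 2, hm 3, hm 4]

end Bounds

/-- the tension `τ̂` is three times differentiable, with
`τ̂''(ρ) = -G'''(τ̂(ρ)) τ̂'(ρ)³` and
`τ̂'''(ρ) = 3 τ̂''(ρ)²/τ̂'(ρ) - G''''(τ̂(ρ)) τ̂'(ρ)⁴`,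
and both `τ̂''` and `τ̂'''` are bounded on `ℝ`. -/
theorem tension_third_deriv_formulas_and_bounded
    (V : ℝ → ℝ) (c₁ c₂ : ℝ) (hc₁ : 0 < c₁)
    (hV : ContDiff ℝ 2 V)
    (hlow : ∀ r : ℝ, c₁ ≤ deriv (deriv V) r)
    (hhigh : ∀ r : ℝ, deriv (deriv V) r ≤ c₂) :
    ContDiff ℝ 3 (tension V) ∧
    (∀ ρ : ℝ,
      iteratedDeriv 2 (tension V) ρ
        = -(iteratedDeriv 3 (gibbsG V) (tension V ρ)) * (deriv (tension V) ρ) ^ 3 ∧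
      iteratedDeriv 3 (tension V) ρ
        = 3 * (iteratedDeriv 2 (tension V) ρ) ^ 2 / deriv (tension V) ρ
          - iteratedDeriv 4 (gibbsG V) (tension V ρ) * (deriv (tension V) ρ) ^ 4) ∧
    (∃ C : ℝ, ∀ ρ : ℝ,
      |iteratedDeriv 2 (tension V) ρ| ≤ C ∧ |iteratedDeriv 3 (tension V) ρ| ≤ C) := by
  obtain ⟨ε, hε, hG2⟩ := exists_pos_le_iteratedDeriv_two_gibbsG hc₁ hV hlow hhigh
  obtain ⟨A, hG3⟩ := exists_abs_iteratedDeriv_three_gibbsG_le hc₁ hV hlow hhigh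
  obtain ⟨B, hG4⟩ := exists_abs_iteratedDeriv_four_gibbsG_le hc₁ hV hlow hhigh
  exact deriv_iSup_mul_sub_formulas_and_bounded (contDiff_gibbsG hc₁ hV hlow) hε hG2 hG3 hG4 rfl
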